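/- arXiv:2111.06578 — 3 statements merged into one kernel-verified Lean document; each statement's English description precedes it below -/
import Mathlib

section
/- For every α ∈ (0, 1/2) there exist two probability distributions D₁ and D₂ on ℝ with total variation distance exactly α, both (C, k)-hypercontractive for a universal constant C (i.e., E|X − EX|^k ≤ C^k (Var X)^{k/2}), whose variances are bounded below by a universal constant, and whose means satisfy |E_{D₁}[X] − E_{D₂}[X]| = 2 α^{1−1/k}. -/
open MeasureTheory

/-- Total variation distance between two measures on `ℝ`:
`d_TV(μ, ν) = sup_{A measurable} |μ(A) − ν(A)|`. -/
lemma integrable_dirac' (f : ℝ → ℝ) (x : ℝ) : Integrable f (Measure.dirac x) := by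
  have : f =ᵐ[Measure.dirac x] fun _ => f x := by
    rw [Filter.EventuallyEq, ae_dirac_eq]; simp
  exact (integrable_congr this).mpr (integrable_const _)

lemma integrable_tri (a b c : ℝ) (x y z : ℝ) (f : ℝ → ℝ) :
    Integrable f (ENNReal.ofReal a • Measure.dirac x + ENNReal.ofReal b • Measure.dirac y
      + ENNReal.ofReal c • Measure.dirac z) := by
  refine Integrable.add_measure (Integrable.add_measure ?_ ?_) ?_ <;>
    exact ((integrable_dirac' f _).smul_measure ENNReal.ofReal_ne_top)

lemma integral_tri (a b c : ℝ) (ha : 0 ≤ a) (hb : 0 ≤ b) (hc : 0 ≤ c) (x y z : ℝ) (f : ℝ → ℝ) :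
    ∫ w, f w ∂(ENNReal.ofReal a • Measure.dirac x + ENNReal.ofReal b • Measure.dirac y
      + ENNReal.ofReal c • Measure.dirac z) = a * f x + b * f y + c * f z := by
  rw [integral_add_measure (Integrable.add_measure ((integrable_dirac' f x).smul_measure ENNReal.ofReal_ne_top) ((integrable_dirac' f y).smul_measure ENNReal.ofReal_ne_top)) ((integrable_dirac' f z).smul_measure ENNReal.ofReal_ne_top),
     integral_add_measure ((integrable_dirac' f x).smul_measure ENNReal.ofReal_ne_top) ((integrable_dirac' f y).smul_measure ENNReal.ofReal_ne_top)]
  simp [integral_smul_measure, integral_dirac, ENNReal.toReal_ofReal, ha, hb, hc, smul_eq_mul]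

lemma apply_tri (a b c : ℝ) (ha : 0 ≤ a) (hb : 0 ≤ b) (hc : 0 ≤ c) (x y z : ℝ)
    {s : Set ℝ} (hs : MeasurableSet s) :
    (((ENNReal.ofReal a • Measure.dirac x + ENNReal.ofReal b • Measure.dirac y
      + ENNReal.ofReal c • Measure.dirac z)) s).toReal
      = a * s.indicator 1 x + b * s.indicator 1 y + c * s.indicator 1 z := by
  rw [Measure.add_apply, Measure.add_apply, Measure.smul_apply, Measure.smul_apply, Measure.smul_apply,
    Measure.dirac_apply' _ hs, Measure.dirac_apply' _ hs, Measure.dirac_apply' _ hs]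
  by_cases hx : x ∈ s <;> by_cases hy : y ∈ s <;> by_cases hz : z ∈ s <;>
    simp [Set.indicator_apply, hx, hy, hz, smul_eq_mul, ENNReal.toReal_add, ENNReal.toReal_ofReal, ha, hb, hc,
      ← ENNReal.ofReal_add, ha, hb, hc] <;> linarith

noncomputable def tvDist (μ ν : Measure ℝ) : ℝ :=
  ⨆ s : {s : Set ℝ // MeasurableSet s}, |(μ s).toReal - (ν s).toReal|

set_option maxHeartbeats 1000000 in
/-- For every `α ∈ (0,1/2)` there are two probability distributions on `ℝ` at total variation
distance exactly `α`, both `(C,k)`-hypercontractive for a universal constant `C`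
(`E|X−EX|^k ≤ C^k (Var X)^{k/2}`), with variances bounded below by a universal constant `c`,
and whose means differ by exactly `2 α^{1−1/k}`. -/
theorem robust_mean_lb_hypercontractive_pair :
    ∃ C > (0 : ℝ), ∃ c > (0 : ℝ), ∀ k : ℕ, 2 ≤ k → ∀ α : ℝ, α ∈ Set.Ioo (0 : ℝ) (1/2) →
      ∃ D₁ D₂ : Measure ℝ,
        IsProbabilityMeasure D₁ ∧ IsProbabilityMeasure D₂ ∧
        tvDist D₁ D₂ = α ∧
        (∫ x, |x - ∫ y, y ∂D₁| ^ k ∂D₁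
          ≤ C ^ k * (∫ x, (x - ∫ y, y ∂D₁) ^ 2 ∂D₁) ^ ((k : ℝ) / 2)) ∧
        (∫ x, |x - ∫ y, y ∂D₂| ^ k ∂D₂
          ≤ C ^ k * (∫ x, (x - ∫ y, y ∂D₂) ^ 2 ∂D₂) ^ ((k : ℝ) / 2)) ∧
        c ≤ ∫ x, (x - ∫ y, y ∂D₁) ^ 2 ∂D₁ ∧
        c ≤ ∫ x, (x - ∫ y, y ∂D₂) ^ 2 ∂D₂ ∧
        |(∫ x, x ∂D₁) - ∫ x, x ∂D₂| = 2 * α ^ (1 - 1 / (k : ℝ)) := by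
  simp only [tvDist]
  refine ⟨8, by norm_num, 1/2, by norm_num, ?_⟩
  intro k hk α hα
  obtain ⟨hα0, hα2⟩ := hα
  have hα1 : α < 1 := by linarith
  have hkR : (2:ℝ) ≤ (k:ℝ) := by exact_mod_cast hk
  have hk0 : (k:ℝ) ≠ 0 := by positivity
  set a : ℝ := (1 - α) / 2 with ha_def
  have ha : 0 ≤ a := by simp [ha_def]; linarith
  set t : ℝ := α ^ (-(1 / (k:ℝ))) with ht_def
  have ht0 : 0 < t := Real.rpow_pos_of_pos hα0 _
  have ht1 : 1 < t := by
    rw [ht_def]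
    apply Real.one_lt_rpow_iff_of_pos hα0 |>.mpr
    right
    constructor
    · linarith
    · rw [neg_lt, neg_zero]; positivity
  have hαt : α * t = α ^ (1 - 1 / (k:ℝ)) := by
    rw [ht_def]
    nth_rewrite 1 [show α = α ^ (1:ℝ) by rw [Real.rpow_one]]
    rw [← Real.rpow_add hα0]
    ring_nf
  have htk : t ^ k = α⁻¹ := by
    rw [ht_def, ← Real.rpow_natCast (α ^ (-(1 / (k:ℝ)))) k, ← Real.rpow_mul hα0.le]
    rw [show -(1 / (k:ℝ)) * k = -1 by field_simp]
    rw [Real.rpow_neg_one]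
  have hμ1 : α * t ≤ 1 := by
    rw [hαt]
    apply Real.rpow_le_one hα0.le hα1.le
    have : 1 / (k:ℝ) ≤ 1/2 := by
      rw [div_le_div_iff₀ (by positivity) (by norm_num)]; linarith
    linarith
  set M : ℝ → Measure ℝ := fun z => ENNReal.ofReal a • Measure.dirac (-1)
    + ENNReal.ofReal a • Measure.dirac 1 + ENNReal.ofReal α • Measure.dirac z with hM_def
  have hprob : ∀ z : ℝ, IsProbabilityMeasure (M z) := by
    intro z
    constructor
    rw [hM_def]
    simp only [Measure.add_apply, Measure.smul_apply, Measure.dirac_apply' _ MeasurableSet.univ,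
      smul_eq_mul, Set.indicator_univ, Pi.one_apply, mul_one]
    rw [← ENNReal.ofReal_add ha ha, ← ENNReal.ofReal_add (by linarith) hα0.le]
    rw [show a + a + α = 1 by rw [ha_def]; ring]
    exact ENNReal.ofReal_one
  have hmean : ∀ z : ℝ, (∫ x, x ∂(M z)) = α * z := by
    intro z
    rw [hM_def]
    rw [integral_tri a a α ha ha hα0.le (-1) 1 z (fun w => w)]
    ring
  -- moment and variance bounds for z with |z| = t
  have key : ∀ z : ℝ, |z| = t →
      (∫ x, |x - ∫ y, y ∂(M z)| ^ k ∂(M z)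
        ≤ (8:ℝ) ^ k * (∫ x, (x - ∫ y, y ∂(M z)) ^ 2 ∂(M z)) ^ ((k : ℝ) / 2)) ∧
      (1/2 : ℝ) ≤ ∫ x, (x - ∫ y, y ∂(M z)) ^ 2 ∂(M z) := by
    intro z hz
    rw [hmean z]
    set μ : ℝ := α * z with hμ_def
    have hμabs : |μ| ≤ 1 := by
      rw [hμ_def, abs_mul, abs_of_pos hα0, hz]; exact hμ1
    obtain ⟨hμa, hμb⟩ := abs_le.mp hμabs
    have hvar : (∫ x, (x - μ) ^ 2 ∂(M z)) = a * (-1 - μ)^2 + a * (1 - μ)^2 + α * (z - μ)^2 := by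
      rw [hM_def]; exact integral_tri a a α ha ha hα0.le (-1) 1 z (fun x => (x - μ)^2)
    have hvarlb : (1/2 : ℝ) ≤ ∫ x, (x - μ) ^ 2 ∂(M z) := by
      rw [hvar]
      have h1 : a * (-1 - μ)^2 + a * (1 - μ)^2 = a * (2 + 2*μ^2) := by ring
      nlinarith [sq_nonneg μ, sq_nonneg (z - μ), mul_nonneg hα0.le (sq_nonneg (z - μ))]
    refine ⟨?_, hvarlb⟩
    have hmom : (∫ x, |x - μ| ^ k ∂(M z)) = a * |-1 - μ|^k + a * |1 - μ|^k + α * |z - μ|^k := by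
      rw [hM_def]; exact integral_tri a a α ha ha hα0.le (-1) 1 z (fun x => |x - μ|^k)
    have hb1 : |-1 - μ| ≤ 2 := abs_le.mpr ⟨by linarith, by linarith⟩
    have hb2 : |1 - μ| ≤ 2 := abs_le.mpr ⟨by linarith, by linarith⟩
    have hb3 : |z - μ| ≤ t := by
      rw [hμ_def, show z - α * z = z * (1 - α) by ring, abs_mul, hz,
        abs_of_nonneg (by linarith : (0:ℝ) ≤ 1 - α)]
      nlinarith
    have hp1 : |-1 - μ|^k ≤ 2^k := pow_le_pow_left₀ (abs_nonneg _) hb1 k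
    have hp2 : |1 - μ|^k ≤ 2^k := pow_le_pow_left₀ (abs_nonneg _) hb2 k
    have hp3 : |z - μ|^k ≤ t^k := pow_le_pow_left₀ (abs_nonneg _) hb3 k
    have h2k : (0:ℝ) < 2^k := by positivity
    have hmomub : (∫ x, |x - μ| ^ k ∂(M z)) ≤ 2^k + 1 := by
      rw [hmom]
      have h3 : α * |z - μ|^k ≤ 1 := by
        calc α * |z - μ|^k ≤ α * t^k := mul_le_mul_of_nonneg_left hp3 hα0.le
        _ = 1 := by rw [htk]; field_simp
      have h4a : a * |-1 - μ|^k ≤ a * 2^k := mul_le_mul_of_nonneg_left hp1 ha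
      have h4b : a * |1 - μ|^k ≤ a * 2^k := mul_le_mul_of_nonneg_left hp2 ha
      have h5 : a * 2^k + a * 2^k ≤ 2^k := by
        have h2a : a * 2^k + a * 2^k = (1 - α) * 2^k := by rw [ha_def]; ring
        have : (1 - α) * 2^k ≤ 1 * 2^k := mul_le_mul_of_nonneg_right (by linarith) h2k.le
        linarith
      linarith
    have hrhs : (4:ℝ)^k ≤ (8:ℝ) ^ k * (∫ x, (x - μ) ^ 2 ∂(M z)) ^ ((k : ℝ) / 2) := by
      have e1 : ((1:ℝ)/2) ^ ((k:ℝ)/2) ≤ (∫ x, (x - μ) ^ 2 ∂(M z)) ^ ((k : ℝ) / 2) :=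
        Real.rpow_le_rpow (by norm_num) hvarlb (by positivity)
      have e2 : ((1:ℝ)/2) ^ ((k:ℝ)) ≤ ((1:ℝ)/2) ^ ((k:ℝ)/2) :=
        Real.rpow_le_rpow_of_exponent_ge (by norm_num) (by norm_num) (by linarith)
      have e3 : ((1:ℝ)/2) ^ ((k:ℝ)) = ((1:ℝ)/2) ^ k := Real.rpow_natCast _ k
      have e4 : (8:ℝ)^k * ((1:ℝ)/2)^k = 4^k := by
        rw [← mul_pow]; norm_num
      have h8 : (0:ℝ) < 8^k := by positivity
      calc (4:ℝ)^k = 8^k * ((1:ℝ)/2)^k := e4.symm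
      _ = 8^k * ((1:ℝ)/2) ^ ((k:ℝ)) := by rw [e3]
      _ ≤ 8^k * ((1:ℝ)/2) ^ ((k:ℝ)/2) := mul_le_mul_of_nonneg_left e2 h8.le
      _ ≤ 8^k * (∫ x, (x - μ) ^ 2 ∂(M z)) ^ ((k : ℝ) / 2) := mul_le_mul_of_nonneg_left e1 h8.le
    have h24 : (2:ℝ)^k + 1 ≤ 4^k := by
      have : (4:ℝ)^k = 2^k * 2^k := by rw [← mul_pow]; norm_num
      have h2 : (2:ℝ) ≤ 2^k := by
        calc (2:ℝ) = 2^1 := (pow_one 2).symm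
        _ ≤ 2^k := pow_le_pow_right₀ (by norm_num) (by omega)
      have h3 : 2*2^k ≤ (2:ℝ)^k*2^k := mul_le_mul_of_nonneg_right h2 h2k.le
      linarith
    linarith
  refine ⟨M (-t), M t, hprob _, hprob _, ?_, (key (-t) (by rw [abs_neg, abs_of_pos ht0])).1,
    (key t (abs_of_pos ht0)).1, (key (-t) (by rw [abs_neg, abs_of_pos ht0])).2,
    (key t (abs_of_pos ht0)).2, ?_⟩
  · -- tvDist = α
    haveI : Nonempty {s : Set ℝ // MeasurableSet s} := ⟨⟨∅, MeasurableSet.empty⟩⟩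
    have happly : ∀ z : ℝ, ∀ s : Set ℝ, MeasurableSet s → ((M z) s).toReal
        = a * s.indicator 1 (-1) + a * s.indicator 1 1 + α * s.indicator 1 z := by
      intro z s hs
      rw [hM_def]; exact apply_tri a a α ha ha hα0.le (-1) 1 z hs
    have hind : ∀ s : Set ℝ, ∀ w : ℝ, |s.indicator (1 : ℝ → ℝ) w| ≤ 1 := by
      intro s w
      by_cases h : w ∈ s <;> simp [Set.indicator_apply, h]
    have bound : ∀ s : {s : Set ℝ // MeasurableSet s},
        |((M (-t)) s.1).toReal - ((M t) s.1).toReal| ≤ α := by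
      rintro ⟨s, hs⟩
      rw [happly _ s hs, happly _ s hs]
      rw [show a * s.indicator 1 (-1) + a * s.indicator 1 1 + α * s.indicator 1 (-t)
          - (a * s.indicator 1 (-1) + a * s.indicator 1 1 + α * s.indicator 1 t)
          = α * (s.indicator 1 (-t) - s.indicator 1 t) by ring]
      rw [abs_mul, abs_of_pos hα0]
      have : |s.indicator (1:ℝ→ℝ) (-t) - s.indicator 1 t| ≤ 1 := by
        by_cases h1 : -t ∈ s <;> by_cases h2 : t ∈ s <;>
          simp [Set.indicator_apply, h1, h2]
      nlinarith
    apply le_antisymm (ciSup_le bound)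
    have hval : |((M (-t)) ({-t} : Set ℝ)).toReal - ((M t) ({-t} : Set ℝ)).toReal| = α := by
      rw [happly _ _ (measurableSet_singleton _), happly _ _ (measurableSet_singleton _)]
      have h1 : (-1 : ℝ) ∉ ({-t} : Set ℝ) := by
        simp only [Set.mem_singleton_iff]; intro h; nlinarith [neg_eq_iff_eq_neg.mp h]
      have h2 : (1 : ℝ) ∉ ({-t} : Set ℝ) := by
        simp only [Set.mem_singleton_iff]; intro h; nlinarith
      have h3 : (-t : ℝ) ∈ ({-t} : Set ℝ) := rfl
      have h4 : (t : ℝ) ∉ ({-t} : Set ℝ) := by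
        simp only [Set.mem_singleton_iff]; intro h; nlinarith
      rw [Set.indicator_of_notMem h1, Set.indicator_of_notMem h2,
        Set.indicator_of_mem h3, Set.indicator_of_notMem h4]
      simp [abs_of_pos hα0]
    calc α = |((M (-t)) ({-t} : Set ℝ)).toReal - ((M t) ({-t} : Set ℝ)).toReal| := hval.symm
    _ ≤ _ := le_ciSup ⟨α, by rintro _ ⟨s, rfl⟩; exact bound s⟩
        (⟨{-t}, measurableSet_singleton _⟩ : {s : Set ℝ // MeasurableSet s})
  · -- mean difference
    rw [hmean, hmean]
    rw [show α * (-t) - α * t = -(2 * (α * t)) by ring, abs_neg,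
      abs_of_nonneg (by positivity), hαt]
end

section
/- Let Σ be a symmetric positive semidefinite d×d matrix with largest eigenvalue λ₁ = ‖Σ‖ and top unit eigenvector u. For ρ ∈ (0, 1/8], the set of unit vectors v with vᵀΣv ≥ (1 − 4ρ)‖Σ‖ contains a spherical cap around u, and hence has uniform spherical measure at least exp(−c d log(1/ρ)) for some universal constant c > 0. -/
open MeasureTheory Matrix

/-- Euclidean norm on `Fin d → ℝ`. -/
noncomputable def eucNorm {d : ℕ} (x : Fin d → ℝ) : ℝ := Real.sqrt (∑ i, x i ^ 2)

/-- The uniform (normalized) measure of a subset `A` of the unit sphere in `ℝ^d`, defined as the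
normalized cone measure. -/
noncomputable def sphereMeasure (d : ℕ) (A : Set (Fin d → ℝ)) : ℝ :=
  (volume {x : Fin d → ℝ | x ≠ 0 ∧ eucNorm x ≤ 1 ∧ (eucNorm x)⁻¹ • x ∈ A}).toReal /
    (volume {x : Fin d → ℝ | eucNorm x ≤ 1}).toReal

/-! Factor `Σ = BᵀB`, so that `vᵀΣv = ‖B v‖²`. Since `u` maximizes `‖B ·‖` on the sphere,
`‖B z‖ ≤ ‖B u‖ ‖z‖` for all `z`, and the triangle inequality gives `‖B v‖ ≥ (1 - ρ) ‖B u‖` whenever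
`‖v - u‖ ≤ ρ`; squaring, `vᵀΣv ≥ (1 - ρ)² λ₁ ≥ (1 - 4ρ) λ₁` on the cap of radius `ρ` around `u`.

For the measure, the cone over that cap contains the ball of radius `ρ/4` around `u/2`, whose
volume is `(ρ/4)^d` times that of the unit ball, and `(ρ/4)^d ≥ ρ^(2d) = exp(-2 d log(1/ρ))` as
`ρ ≤ 1/4`. -/

open Metric
open scoped MatrixOrder

section NormedSpace
variable {E : Type*} [NormedAddCommGroup E] [NormedSpace ℝ E] {u x : E}

lemma abs_norm_sub_half_le (hu : ‖u‖ = 1) : |‖x‖ - 2⁻¹| ≤ ‖x - (2 : ℝ)⁻¹ • u‖ := by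
  simpa [norm_smul, hu] using abs_norm_sub_norm_le x ((2 : ℝ)⁻¹ • u)

lemma norm_inv_norm_smul_sub_le (hu : ‖u‖ = 1) (hx : x ≠ 0) :
    ‖‖x‖⁻¹ • x - u‖ ≤ 4 * ‖x - (2 : ℝ)⁻¹ • u‖ := by
  have hn : 0 < ‖x‖ := norm_pos_iff.mpr hx
  have hrescale : ‖‖x‖⁻¹ • x - (2 : ℝ) • x‖ = |1 - 2 * ‖x‖| := by
    rw [← sub_smul, norm_smul, Real.norm_eq_abs, ← abs_norm x, ← abs_mul, abs_norm,
      sub_mul, inv_mul_cancel₀ hn.ne']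
  have hdouble : ‖(2 : ℝ) • x - u‖ = 2 * ‖x - (2 : ℝ)⁻¹ • u‖ := by
    rw [show (2 : ℝ) • x - u = (2 : ℝ) • (x - (2 : ℝ)⁻¹ • u) by
      rw [smul_sub, smul_inv_smul₀ two_ne_zero], norm_smul, Real.norm_two]
  have habs := abs_norm_sub_half_le (x := x) hu
  calc ‖‖x‖⁻¹ • x - u‖ ≤ ‖‖x‖⁻¹ • x - (2 : ℝ) • x‖ + ‖(2 : ℝ) • x - u‖ :=
        norm_sub_le_norm_sub_add_norm_sub _ _ _
    _ ≤ 4 * ‖x - (2 : ℝ)⁻¹ • u‖ := by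
      rw [hrescale, hdouble]
      have : |1 - 2 * ‖x‖| = 2 * |‖x‖ - 2⁻¹| := by
        rw [abs_sub_comm, show 2 * ‖x‖ - 1 = 2 * (‖x‖ - 2⁻¹) by ring, abs_mul, abs_two]
      linarith

end NormedSpace

section EucNorm
variable {d : ℕ}

lemma eucNorm_eq_norm_toLp (x : Fin d → ℝ) : eucNorm x = ‖WithLp.toLp 2 x‖ := by
  simp [EuclideanSpace.norm_eq, eucNorm]

lemma eucNorm_smul (r : ℝ) (x : Fin d → ℝ) : eucNorm (r • x) = |r| * eucNorm x := by
  rw [eucNorm_eq_norm_toLp, eucNorm_eq_norm_toLp, WithLp.toLp_smul, norm_smul, Real.norm_eq_abs]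

lemma eucNorm_sq (x : Fin d → ℝ) : eucNorm x ^ 2 = x ⬝ᵥ x := by
  rw [eucNorm, Real.sq_sqrt (Finset.sum_nonneg fun i _ => sq_nonneg (x i))]
  simp [dotProduct, sq]

lemma volume_eucNorm_sub_le (c : Fin d → ℝ) (r : ℝ) :
    volume {x | eucNorm (x - c) ≤ r} = volume (closedBall (WithLp.toLp 2 c) r) := by
  have hpre : {x | eucNorm (x - c) ≤ r} = WithLp.toLp 2 ⁻¹' closedBall (WithLp.toLp 2 c) r := by
    ext x; simp [eucNorm_eq_norm_toLp, dist_eq_norm]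
  rw [hpre, (PiLp.volume_preserving_toLp (Fin d)).measure_preimage
    measurableSet_closedBall.nullMeasurableSet]

lemma volume_eucNorm_le (r : ℝ) :
    volume {x : Fin d → ℝ | eucNorm x ≤ r} =
      volume (closedBall (0 : EuclideanSpace ℝ (Fin d)) r) := by
  simpa using volume_eucNorm_sub_le (0 : Fin d → ℝ) r

end EucNorm

section QuadraticForm
variable {d : ℕ} {B : Matrix (Fin d) (Fin d) ℝ} {u v : Fin d → ℝ} {ρ : ℝ}

lemma dotProduct_star_mul_self_mulVec (B : Matrix (Fin d) (Fin d) ℝ) (x : Fin d → ℝ) :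
    x ⬝ᵥ ((star B * B) *ᵥ x) = eucNorm (B *ᵥ x) ^ 2 := by
  rw [eucNorm_sq, ← mulVec_mulVec, dotProduct_mulVec, star_eq_conjTranspose,
    conjTranspose_eq_transpose_of_trivial, vecMul_transpose]

lemma eucNorm_mulVec_le_mul_eucNorm
    (hmax : ∀ v, eucNorm v = 1 → eucNorm (B *ᵥ v) ≤ eucNorm (B *ᵥ u)) (z : Fin d → ℝ) :
    eucNorm (B *ᵥ z) ≤ eucNorm (B *ᵥ u) * eucNorm z := by
  rcases eq_or_ne z 0 with rfl | hz
  · simp [eucNorm]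
  have hn : 0 < eucNorm z := by
    rw [eucNorm_eq_norm_toLp]; exact norm_pos_iff.mpr (by simpa using hz)
  have := hmax ((eucNorm z)⁻¹ • z) (by
    rw [eucNorm_smul, abs_inv, abs_of_pos hn, inv_mul_cancel₀ hn.ne'])
  rwa [mulVec_smul, eucNorm_smul, abs_inv, abs_of_pos hn, inv_mul_le_iff₀ hn, mul_comm] at this

lemma one_sub_mul_eucNorm_mulVec_le
    (hmax : ∀ v, eucNorm v = 1 → eucNorm (B *ᵥ v) ≤ eucNorm (B *ᵥ u))
    (hvu : eucNorm (v - u) ≤ ρ) :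
    (1 - ρ) * eucNorm (B *ᵥ u) ≤ eucNorm (B *ᵥ v) := by
  have htri : eucNorm (B *ᵥ u) ≤ eucNorm (B *ᵥ v) + eucNorm (B *ᵥ (v - u)) := by
    simpa [eucNorm_eq_norm_toLp, mulVec_sub, norm_sub_rev] using
      norm_le_norm_add_norm_sub' (WithLp.toLp 2 (B *ᵥ u)) (WithLp.toLp 2 (B *ᵥ v))
  have hdev := eucNorm_mulVec_le_mul_eucNorm hmax (v - u)
  have hBu : 0 ≤ eucNorm (B *ᵥ u) := Real.sqrt_nonneg _
  nlinarith

theorem Matrix.PosSemidef.one_sub_sq_mul_le_dotProduct_mulVec {Sig : Matrix (Fin d) (Fin d) ℝ}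
    (hps : Sig.PosSemidef) (hmax : ∀ v, eucNorm v = 1 → v ⬝ᵥ (Sig *ᵥ v) ≤ u ⬝ᵥ (Sig *ᵥ u))
    (hρ : ρ ≤ 1) (hvu : eucNorm (v - u) ≤ ρ) :
    (1 - ρ) ^ 2 * (u ⬝ᵥ (Sig *ᵥ u)) ≤ v ⬝ᵥ (Sig *ᵥ v) := by
  obtain ⟨B, rfl⟩ := CStarAlgebra.nonneg_iff_eq_star_mul_self.mp hps.nonneg
  simp only [dotProduct_star_mul_self_mulVec] at hmax ⊢
  have hmaxB : ∀ v, eucNorm v = 1 → eucNorm (B *ᵥ v) ≤ eucNorm (B *ᵥ u) := fun v hv =>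
    (pow_le_pow_iff_left₀ (Real.sqrt_nonneg _) (Real.sqrt_nonneg _) two_ne_zero).mp (hmax v hv)
  rw [← mul_pow]
  exact pow_le_pow_left₀ (mul_nonneg (sub_nonneg.mpr hρ) (Real.sqrt_nonneg _))
    (one_sub_mul_eucNorm_mulVec_le hmaxB hvu) 2

end QuadraticForm

section SphereMeasure
variable {d : ℕ}

def sphericalCap (u : Fin d → ℝ) (r : ℝ) : Set (Fin d → ℝ) :=
  {v | eucNorm v = 1 ∧ eucNorm (v - u) ≤ r}

def unitCone (A : Set (Fin d → ℝ)) : Set (Fin d → ℝ) :=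
  {x | x ≠ 0 ∧ eucNorm x ≤ 1 ∧ (eucNorm x)⁻¹ • x ∈ A}

lemma sphereMeasure_eq (A : Set (Fin d → ℝ)) :
    sphereMeasure d A =
      volume.real (unitCone A) / volume.real (closedBall (0 : EuclideanSpace ℝ (Fin d)) 1) := by
  rw [sphereMeasure, volume_eucNorm_le]
  rfl

lemma volume_unitCone_ne_top (A : Set (Fin d → ℝ)) : volume (unitCone A) ≠ ⊤ := by
  have hball : volume {x : Fin d → ℝ | eucNorm x ≤ 1} ≠ ⊤ := by
    rw [volume_eucNorm_le]; exact measure_closedBall_lt_top.ne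
  exact ne_top_of_le_ne_top hball (measure_mono fun x hx => hx.2.1)

lemma sphereMeasure_mono {A A' : Set (Fin d → ℝ)} (h : A ⊆ A') :
    sphereMeasure d A ≤ sphereMeasure d A' := by
  rw [sphereMeasure_eq, sphereMeasure_eq]
  gcongr
  · exact volume_unitCone_ne_top A'
  · exact fun x hx => ⟨hx.1, hx.2.1, h hx.2.2⟩

lemma closedBall_half_subset_unitCone_sphericalCap {u : Fin d → ℝ} {ρ : ℝ} (hu : eucNorm u = 1)
    (hρ2 : ρ < 2) :
    {x | eucNorm (x - (2 : ℝ)⁻¹ • u) ≤ ρ / 4} ⊆ unitCone (sphericalCap u ρ) := by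
  intro x hx
  simp only [unitCone, sphericalCap, Set.mem_ofPred_eq, eucNorm_eq_norm_toLp, WithLp.toLp_sub,
    WithLp.toLp_smul] at hx hu ⊢
  have habs := abs_le.mp ((abs_norm_sub_half_le hu).trans hx)
  have hx0 : WithLp.toLp 2 x ≠ 0 := norm_pos_iff.mp (by linarith)
  refine ⟨fun h => hx0 (by simp [h]), by linarith, norm_smul_inv_norm hx0, ?_⟩
  linarith [norm_inv_norm_smul_sub_le hu hx0]

lemma pow_le_sphereMeasure_sphericalCap {u : Fin d → ℝ} {ρ : ℝ} (hu : eucNorm u = 1)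
    (hρ : 0 < ρ) (hρ2 : ρ < 2) :
    (ρ / 4) ^ d ≤ sphereMeasure d (sphericalCap u ρ) := by
  have hball : 0 < volume.real (closedBall (0 : EuclideanSpace ℝ (Fin d)) 1) :=
    ENNReal.toReal_pos (measure_closedBall_pos _ _ one_pos).ne' measure_closedBall_lt_top.ne
  rw [sphereMeasure_eq, le_div_iff₀ hball]
  calc (ρ / 4) ^ d * volume.real (closedBall (0 : EuclideanSpace ℝ (Fin d)) 1)
      = volume.real {x | eucNorm (x - (2 : ℝ)⁻¹ • u) ≤ ρ / 4} := by
        rw [measureReal_def volume {x | _}, volume_eucNorm_sub_le, ← measureReal_def,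
          Measure.addHaar_real_closedBall' _ (WithLp.toLp 2 ((2 : ℝ)⁻¹ • u)) (r := ρ / 4)
            (by positivity), finrank_euclideanSpace_fin]
    _ ≤ volume.real (unitCone (sphericalCap u ρ)) :=
        measureReal_mono (closedBall_half_subset_unitCone_sphericalCap hu hρ2)
          (volume_unitCone_ne_top _)

end SphereMeasure

lemma exp_neg_two_mul_log_le_pow (d : ℕ) {ρ : ℝ} (hρ : 0 < ρ) (hρ4 : ρ ≤ 1 / 4) :
    Real.exp (-(2 * d * Real.log (1 / ρ))) ≤ (ρ / 4) ^ d := by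
  calc Real.exp (-(2 * d * Real.log (1 / ρ))) = (ρ ^ 2) ^ d := by
        rw [one_div, Real.log_inv, show -(2 * d * -Real.log ρ) = d * Real.log (ρ ^ 2) by
          rw [Real.log_pow]; push_cast; ring, Real.exp_nat_mul, Real.exp_log (by positivity)]
    _ ≤ (ρ / 4) ^ d := pow_le_pow_left₀ (sq_nonneg ρ) (by nlinarith) d

/-- There is a universal constant `c > 0` such that for any symmetric PSD matrix `Σ` with top
unit eigenvector `u` (i.e. `u` maximizes the quadratic form over the sphere, with value
`λ₁ = uᵀΣu = ‖Σ‖`) and any `ρ ∈ (0, 1/8]`, the set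
`E := {v : ‖v‖ = 1, vᵀΣv ≥ (1 − 4ρ)λ₁}` contains a spherical cap around `u`, and has uniform
spherical measure at least `exp(−c d log(1/ρ))`. -/
theorem near_top_eigenvector_set_measure :
    ∃ c : ℝ, 0 < c ∧
      ∀ (d : ℕ) (Sig : Matrix (Fin d) (Fin d) ℝ), Sig.IsSymm → Sig.PosSemidef →
        ∀ u : Fin d → ℝ, eucNorm u = 1 →
          (∀ v : Fin d → ℝ, eucNorm v = 1 → v ⬝ᵥ (Sig *ᵥ v) ≤ u ⬝ᵥ (Sig *ᵥ u)) →
          ∀ ρ : ℝ, 0 < ρ → ρ ≤ 1/8 →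
            (∃ r : ℝ, 0 < r ∧
              {v : Fin d → ℝ | eucNorm v = 1 ∧ eucNorm (v - u) ≤ r} ⊆
                {v : Fin d → ℝ | eucNorm v = 1 ∧
                  (1 - 4 * ρ) * (u ⬝ᵥ (Sig *ᵥ u)) ≤ v ⬝ᵥ (Sig *ᵥ v)}) ∧
            Real.exp (-(c * d * Real.log (1/ρ))) ≤
              sphereMeasure d {v : Fin d → ℝ | eucNorm v = 1 ∧
                (1 - 4 * ρ) * (u ⬝ᵥ (Sig *ᵥ u)) ≤ v ⬝ᵥ (Sig *ᵥ v)} := by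
  refine ⟨2, two_pos, fun d Sig _ hps u hu hmax ρ hρ hρ8 => ?_⟩
  have hcap : sphericalCap u ρ ⊆ {v | eucNorm v = 1 ∧
      (1 - 4 * ρ) * (u ⬝ᵥ (Sig *ᵥ u)) ≤ v ⬝ᵥ (Sig *ᵥ v)} := by
    rintro v ⟨hv, hvu⟩
    have hq : 0 ≤ u ⬝ᵥ (Sig *ᵥ u) := by simpa using hps.dotProduct_mulVec_nonneg u
    have := hps.one_sub_sq_mul_le_dotProduct_mulVec hmax (by linarith) hvu
    exact ⟨hv, by nlinarith [mul_nonneg (by positivity : 0 ≤ 2 * ρ + ρ ^ 2) hq]⟩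
  exact ⟨⟨ρ, hρ, hcap⟩, (exp_neg_two_mul_log_le_pow d hρ (by linarith)).trans
    ((pow_le_sphereMeasure_sphericalCap hu hρ (by linarith)).trans (sphereMeasure_mono hcap))⟩
end

section
/- Consider an exponential mechanism over a fixed compact support 𝒮 with density proportional to exp(−(ε/(4Δ)) D_S(θ̂)). Suppose there exist disjoint interpretation sets with: the 'good' set G_in = {θ̂ : D(θ̂) ≤ a} has base measure at least e^{−c₂ p} times that of the whole support, and D_S approximates a target score D within additive b uniformly (so D_S ≤ a + b on G_in and D_S ≥ a' − b whenever D(θ̂) ≥ a' > a + 2b). Then the probability of outputting θ̂ with D(θ̂) ≥ a' is at most e^{c₂ p} · exp(−ε(a' − a − 2b)/(4Δ)). -/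
open MeasureTheory

/-!
The unnormalised Gibbs weight is at most `exp(-ε(a' - b)/(4Δ))` on the bad set `{a' ≤ D}` and at
least `exp(-ε(a + b)/(4Δ))` on the good set `{D ≤ a}`, since `D_S` is within `b` of `D`. Hence the
bad mass is at most that upper weight times `ν 𝒮`, while the normaliser is at least the lower
weight times `ν {D ≤ a} ≥ e^{-c₂ p} ν 𝒮`; the ratio of the two weights is
`exp(-ε(a' - a - 2b)/(4Δ))`.
-/

section GibbsTail

variable {α : Type*} [MeasurableSpace α] {ν : Measure α} {f : α → ENNReal}

lemma mul_measure_le_lintegral_of_le_on (hf : Measurable f) {G : Set α} {c : ENNReal}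
    (hG : ∀ x ∈ G, c ≤ f x) : c * ν G ≤ ∫⁻ x, f x ∂ν :=
  calc c * ν G = ∫⁻ _ in G, c ∂ν := (setLIntegral_const G c).symm
    _ ≤ ∫⁻ x in G, f x ∂ν := setLIntegral_mono hf hG
    _ ≤ ∫⁻ x, f x ∂ν := setLIntegral_le_lintegral G f

lemma setLIntegral_le_mul_measure_of_le_on {B : Set α} {c : ENNReal} (hB : ∀ x ∈ B, f x ≤ c) :
    ∫⁻ x in B, f x ∂ν ≤ c * ν B :=
  calc ∫⁻ x in B, f x ∂ν ≤ ∫⁻ _ in B, c ∂ν := setLIntegral_mono measurable_const hB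
    _ = c * ν B := setLIntegral_const B c

theorem setLIntegral_div_lintegral_le (hf : Measurable f) {B G : Set α} {cB cG q r : ENNReal}
    (hB : ∀ x ∈ B, f x ≤ cB) (hG : ∀ x ∈ G, cG ≤ f x) (hq : q * ν Set.univ ≤ ν G)
    (hr : cB ≤ r * (cG * q)) :
    (∫⁻ x in B, f x ∂ν) / ∫⁻ x, f x ∂ν ≤ r := by
  refine ENNReal.div_le_of_le_mul ?_
  calc ∫⁻ x in B, f x ∂ν ≤ cB * ν B := setLIntegral_le_mul_measure_of_le_on hB
    _ ≤ r * (cG * q) * ν Set.univ := by gcongr; exact Set.subset_univ B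
    _ = r * (cG * (q * ν Set.univ)) := by ring
    _ ≤ r * (cG * ν G) := by gcongr
    _ ≤ r * ∫⁻ x, f x ∂ν := by gcongr; exact mul_measure_le_lintegral_of_le_on hf hG

end GibbsTail

lemma antitone_exp_neg_mul_div {ε Δ : ℝ} (hε : 0 ≤ ε) (hΔ : 0 ≤ Δ) :
    Antitone fun x : ℝ => Real.exp (-(ε * x) / (4 * Δ)) := fun _ _ hxy =>
  Real.exp_le_exp.mpr
    (div_le_div_of_nonneg_right (neg_le_neg (mul_le_mul_of_nonneg_left hxy hε)) (by positivity))

theorem exponential_mechanism_utility_general {𝒮 : Type*} [MeasurableSpace 𝒮]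
    (ν : Measure 𝒮) [IsFiniteMeasure ν]
    (D DS : 𝒮 → ℝ) (hDS : Measurable DS)
    (a a' b c₂ p ε Δ : ℝ) (hε : 0 < ε) (hΔ : 0 < Δ)
    (happrox : ∀ θ : 𝒮, |D θ - DS θ| ≤ b)
    (hgood : Real.exp (-(c₂ * p)) * (ν Set.univ).toReal ≤ (ν {θ : 𝒮 | D θ ≤ a}).toReal) :
    (∫⁻ θ in {θ : 𝒮 | a' ≤ D θ}, ENNReal.ofReal (Real.exp (-(ε * DS θ) / (4 * Δ))) ∂ν) /
        (∫⁻ θ, ENNReal.ofReal (Real.exp (-(ε * DS θ) / (4 * Δ))) ∂ν)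
      ≤ ENNReal.ofReal
          (Real.exp (c₂ * p) * Real.exp (-(ε * (a' - a - 2 * b)) / (4 * Δ))) := by
  have hweight := antitone_exp_neg_mul_div hε.le hΔ.le
  refine setLIntegral_div_lintegral_le (by fun_prop) (G := {θ | D θ ≤ a})
    (cB := ENNReal.ofReal (Real.exp (-(ε * (a' - b)) / (4 * Δ))))
    (cG := ENNReal.ofReal (Real.exp (-(ε * (a + b)) / (4 * Δ))))
    (q := ENNReal.ofReal (Real.exp (-(c₂ * p)))) ?bad ?good ?fraction ?ratio
  case bad =>
    intro θ (hθ : a' ≤ D θ)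
    exact ENNReal.ofReal_le_ofReal (hweight (by linarith [(abs_le.mp (happrox θ)).2]))
  case good =>
    intro θ (hθ : D θ ≤ a)
    exact ENNReal.ofReal_le_ofReal (hweight (by linarith [(abs_le.mp (happrox θ)).1]))
  case fraction =>
    rw [← ENNReal.toReal_le_toReal (by finiteness) (measure_ne_top ν _), ENNReal.toReal_mul,
      ENNReal.toReal_ofReal (Real.exp_nonneg _)]
    exact hgood
  case ratio =>
    rw [← ENNReal.ofReal_mul (by positivity), ← ENNReal.ofReal_mul (by positivity),
      ← Real.exp_add, ← Real.exp_add, ← Real.exp_add]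
    exact le_of_eq (congrArg (ENNReal.ofReal ∘ Real.exp) (by ring))

/-- Utility of the exponential mechanism over a fixed support: if the base measure of the 'good'
set `{θ̂ : D(θ̂) ≤ a}` is at least `e^{−c₂ p}` times the total mass, and `D_S` approximates the
target score `D` within additive `b` uniformly, then the exponential mechanism with density
proportional to `exp(−(ε/(4Δ)) D_S(θ̂))` outputs `θ̂` with `D(θ̂) ≥ a'` with probability at most
`e^{c₂ p} · exp(−ε(a' − a − 2b)/(4Δ))`. -/
theorem exponential_mechanism_utility {𝒮 : Type*} [MeasurableSpace 𝒮]
    (ν : Measure 𝒮) [IsFiniteMeasure ν]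
    (D DS : 𝒮 → ℝ) (hD : Measurable D) (hDS : Measurable DS)
    (a a' b c₂ p ε Δ : ℝ) (hb : 0 ≤ b) (hc₂ : 0 < c₂) (hp : 0 < p) (hε : 0 < ε) (hΔ : 0 < Δ)
    (hgap : 2 * b < a' - a)
    (happrox : ∀ θ : 𝒮, |D θ - DS θ| ≤ b)
    (hgood : Real.exp (-(c₂ * p)) * (ν Set.univ).toReal ≤ (ν {θ : 𝒮 | D θ ≤ a}).toReal) :
    (∫⁻ θ in {θ : 𝒮 | a' ≤ D θ}, ENNReal.ofReal (Real.exp (-(ε * DS θ) / (4 * Δ))) ∂ν) /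
        (∫⁻ θ, ENNReal.ofReal (Real.exp (-(ε * DS θ) / (4 * Δ))) ∂ν)
      ≤ ENNReal.ofReal
          (Real.exp (c₂ * p) * Real.exp (-(ε * (a' - a - 2 * b)) / (4 * Δ))) :=
  exponential_mechanism_utility_general ν D DS hDS a a' b c₂ p ε Δ hε hΔ happrox hgood
end
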